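/- arXiv:1902.09737 — 6 statements merged into one kernel-verified Lean document; each statement's English description precedes it below -/
import Mathlib

section
/- The tight lower bound on the effective neighborhood size for the class of linear functions on ℝᵈ is d+1: every neighborhood of size ≤ d positioned in general position can be perfectly fit by a linear function (so no size m ≤ d is effective), and there exists a neighborhood of size d+1 on which some function values cannot be matched by any linear function. -/
/-- The class of linear functions `x ↦ θᵀx` on `ℝᵈ`. -/
def IsLinearFn (d : ℕ) (g : (Fin d → ℝ) → ℝ) : Prop :=
  ∃ θ : Fin d → ℝ, ∀ x, g x = ∑ i, θ i * x i

/-- `d+1` is the tight lower bound on the effective neighborhood size for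
the linear class on `ℝᵈ`: (a) every neighborhood of size `m ≤ d` in general position
(data matrix of rank `m`) can be perfectly fit by a linear function, and (b) there is a
neighborhood of `d+1` (distinct) points and an assignment of values that no linear
function can match. -/
theorem stmt_2 (d : ℕ) :
    (∀ m : ℕ, m ≤ d → ∀ X : Matrix (Fin m) (Fin d) ℝ, X.rank = m →
      ∀ v : Fin m → ℝ, ∃ θ : Fin d → ℝ, X.mulVec θ = v) ∧
    (∃ x : Fin (d + 1) → (Fin d → ℝ), Function.Injective x ∧
      ∃ v : Fin (d + 1) → ℝ, ∀ θ : Fin d → ℝ, ¬ (∀ i, ∑ j, θ j * x i j = v i)) := by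
  constructor
  · intro m _ X hrank v
    have htop : LinearMap.range X.mulVecLin = ⊤ := by
      apply Submodule.eq_top_of_finrank_eq
      rw [← Matrix.rank, hrank, Module.finrank_pi]
      simp
    have hsurj : Function.Surjective X.mulVecLin := LinearMap.range_eq_top.mp htop
    obtain ⟨θ, hθ⟩ := hsurj v
    exact ⟨θ, hθ⟩
  · refine ⟨fun i j => if (i : ℕ) = (j : ℕ) + 1 then 1 else 0, ?_,
      fun i => if i = 0 then 1 else 0, ?_⟩
    · intro a b hab
      have key : ∀ c : Fin (d + 1), ∀ k : ℕ, ∀ hk : k < d,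
          (fun j : Fin d => if (c : ℕ) = (j : ℕ) + 1 then (1:ℝ) else 0) ⟨k, hk⟩ = 1 ↔
            (c : ℕ) = k + 1 := by
        intro c k hk
        by_cases h : (c : ℕ) = k + 1 <;> simp [h]
      have : (a : ℕ) = (b : ℕ) := by
        rcases Nat.eq_zero_or_eq_succ_pred (a : ℕ) with ha | ha
        · rcases Nat.eq_zero_or_eq_succ_pred (b : ℕ) with hb | hb
          · rw [ha, hb]
          · have hk : (b : ℕ) - 1 < d := by omega
            have := congrFun hab ⟨(b : ℕ) - 1, hk⟩
            simp only at this
            split_ifs at this <;> first | omega | norm_num at this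
        · have hk : (a : ℕ) - 1 < d := by omega
          have := congrFun hab ⟨(a : ℕ) - 1, hk⟩
          simp only at this
          split_ifs at this <;> first | omega | norm_num at this
      exact Fin.ext this
    · intro θ h
      have h0 := h 0
      simp at h0
end

section
/- In the symmetric game with squared-error loss and deviation, unconstrained predictor f, constant neighborhood size m, symmetric neighborhoods, and linear witnesses, the optimal predictor f*_S satisfies for every data point xᵢ: f*_S(xᵢ) = (1/(1+λ)) [ yᵢ + (λ/m) (Σ_{xⱼ ∈ B(xᵢ)} X_j† f*_S(X_j))ᵀ xᵢ ], where X_j ∈ ℝ^{m×d} is the matrix of points in B(xⱼ), X_j† its Moore–Penrose pseudo-inverse, and f*_S(X_j) ∈ ℝᵐ the vector of predictor values on B(xⱼ). -/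
/-- Theorem 1, symmetric part. Data `(xᵢ, yᵢ)` with predictor values
`t i = f(xᵢ)` treated as free variables (A1), squared-error loss and deviation (A2),
neighborhoods of constant size `m` (A3) that are symmetric (A4) and cover the data (A5),
and linear witnesses.  If `t` minimizes the symmetric-game objective, and for each `j`
the coefficient vector `θ j` is the least-squares solution of minimal norm on the
neighborhood `B j` (i.e. `θ j = X_j† f(X_j)`), then the optimal predictor satisfies the
fixed point `f*_S(xᵢ) = (1/(1+λ)) [ yᵢ + (λ/m) (Σ_{xⱼ∈B(xᵢ)} X_j† f*_S(X_j))ᵀ xᵢ ]`. -/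
theorem stmt_6 (d n m : ℕ) (hm : 0 < m) (lam : ℝ) (hlam : 0 ≤ lam)
    (x : Fin n → Fin d → ℝ) (y : Fin n → ℝ)
    (B : Fin n → Finset (Fin n))
    (hcard : ∀ i, (B i).card = m)
    (hsym : ∀ i j, j ∈ B i ↔ i ∈ B j)
    (hcover : ∀ i, ∃ j, i ∈ B j)
    (t : Fin n → ℝ)
    (hopt : ∀ s : Fin n → ℝ,
      (∑ i, ((t i - y i) ^ 2 +
        (lam / m) * ⨅ θ' : Fin d → ℝ, ∑ j ∈ B i, (t j - ∑ l, θ' l * x j l) ^ 2)) ≤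
      (∑ i, ((s i - y i) ^ 2 +
        (lam / m) * ⨅ θ' : Fin d → ℝ, ∑ j ∈ B i, (s j - ∑ l, θ' l * x j l) ^ 2)))
    (θ : Fin n → Fin d → ℝ)
    (hls : ∀ j, ∀ θ' : Fin d → ℝ,
      ∑ i ∈ B j, (t i - ∑ l, θ j l * x i l) ^ 2 ≤
        ∑ i ∈ B j, (t i - ∑ l, θ' l * x i l) ^ 2)
    (hminnorm : ∀ j, ∀ θ' : Fin d → ℝ,
      ∑ i ∈ B j, (t i - ∑ l, θ' l * x i l) ^ 2 =
        ∑ i ∈ B j, (t i - ∑ l, θ j l * x i l) ^ 2 →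
      ∑ l, (θ j l) ^ 2 ≤ ∑ l, (θ' l) ^ 2) :
    ∀ i, t i = (1 / (1 + lam)) *
      (y i + (lam / m) * ∑ l, (∑ j ∈ B i, θ j l) * x i l) := by
  have hmR : (0:ℝ) < m := by exact_mod_cast hm
  set c : ℝ := lam / m with hc
  have hc0 : 0 ≤ c := div_nonneg hlam hmR.le
  have hcm : c * m = lam := by rw [hc]; exact div_mul_cancel₀ lam hmR.ne'
  set p : Fin n → Fin n → ℝ := fun k j => ∑ l, θ k l * x j l with hp
  set F : (Fin n → ℝ) → ℝ :=
    fun s => ∑ k, ((s k - y k)^2 + c * ∑ j ∈ B k, (s j - p k j)^2) with hF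
  have hbdd : ∀ (s : Fin n → ℝ) (k : Fin n),
      BddBelow (Set.range fun θ' : Fin d → ℝ => ∑ j ∈ B k, (s j - ∑ l, θ' l * x j l)^2) := by
    intro s k
    refine ⟨0, ?_⟩
    rintro b ⟨θ', rfl⟩
    exact Finset.sum_nonneg fun j _ => sq_nonneg _
  have hFt : ∀ s, F t ≤ F s := by
    intro s
    have h1 : F t = ∑ k, ((t k - y k)^2 +
        c * ⨅ θ' : Fin d → ℝ, ∑ j ∈ B k, (t j - ∑ l, θ' l * x j l)^2) := by
      refine Finset.sum_congr rfl fun k _ => ?_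
      have h : (⨅ θ' : Fin d → ℝ, ∑ j ∈ B k, (t j - ∑ l, θ' l * x j l)^2)
          = ∑ j ∈ B k, (t j - p k j)^2 :=
        le_antisymm (ciInf_le (hbdd t k) (θ k)) (le_ciInf (hls k))
      rw [h]
    have h2 : (∑ k, ((s k - y k)^2 +
        c * ⨅ θ' : Fin d → ℝ, ∑ j ∈ B k, (s j - ∑ l, θ' l * x j l)^2)) ≤ F s := by
      refine Finset.sum_le_sum fun k _ => ?_
      exact add_le_add_right (mul_le_mul_of_nonneg_left (ciInf_le (hbdd s k) (θ k)) hc0) _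
    calc F t = _ := h1
      _ ≤ _ := hopt s
      _ ≤ F s := h2
  intro i
  set S : ℝ := ∑ k ∈ B i, p k i with hS
  have hA : (0:ℝ) < 1 + lam := by linarith
  set Bv : ℝ := 2*((1+lam)*t i - y i - c * S) with hBv
  have key : ∀ ε : ℝ, 0 ≤ (1 + lam) * ε^2 + Bv * ε := by
    intro ε
    have h := hFt (Function.update t i (t i + ε))
    have hinner : ∀ k, ∑ j ∈ B k, (Function.update t i (t i + ε) j - p k j)^2
        = (∑ j ∈ B k, (t j - p k j)^2)
          + (if i ∈ B k then ε^2 + 2*ε*(t i - p k i) else 0) := by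
      intro k
      by_cases hik : i ∈ B k
      · rw [← Finset.add_sum_erase _ _ hik, ← Finset.add_sum_erase _ (fun j => (t j - p k j)^2) hik]
        have he : ∑ j ∈ (B k).erase i, (Function.update t i (t i + ε) j - p k j)^2
            = ∑ j ∈ (B k).erase i, (t j - p k j)^2 :=
          Finset.sum_congr rfl fun j hj => by
            rw [Function.update_of_ne (Finset.ne_of_mem_erase hj)]
        rw [he, Function.update_self, if_pos hik]
        ring
      · rw [if_neg hik, add_zero]
        refine Finset.sum_congr rfl fun j hj => ?_
        rw [Function.update_of_ne (by rintro rfl; exact hik hj)]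
    have hupdate : ∀ k, (Function.update t i (t i + ε) k - y k)^2
        = (t k - y k)^2 + (if k = i then ε^2 + 2*ε*(t i - y i) else 0) := by
      intro k
      by_cases hk : k = i
      · subst hk; rw [Function.update_self, if_pos rfl]; ring
      · rw [Function.update_of_ne hk, if_neg hk, add_zero]
    have hite : ∑ k, (if i ∈ B k then ε^2 + 2*ε*(t i - p k i) else 0)
        = ∑ k ∈ B i, (ε^2 + 2*ε*(t i - p k i)) := by
      have h1 : ∀ k : Fin n, (if i ∈ B k then ε^2 + 2*ε*(t i - p k i) else 0)
          = (if k ∈ B i then ε^2 + 2*ε*(t i - p k i) else 0) := fun k =>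
        if_congr (hsym i k).symm rfl rfl
      simp only [h1]
      rw [Finset.sum_ite_mem, Finset.univ_inter]
    have hsumB : ∑ k ∈ B i, (ε^2 + 2*ε*(t i - p k i))
        = m * ε^2 + 2*ε*(m * t i - S) := by
      rw [Finset.sum_add_distrib, Finset.sum_const, hcard]
      have h2 : ∑ k ∈ B i, 2*ε*(t i - p k i) = 2*ε*(∑ k ∈ B i, (t i - p k i)) :=
        (Finset.mul_sum _ _ _).symm
      rw [h2, Finset.sum_sub_distrib, Finset.sum_const, hcard, hS]
      simp only [nsmul_eq_mul]
    have hsum : F (Function.update t i (t i + ε))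
        = F t + (ε^2 + 2*ε*(t i - y i)) + c * (m * ε^2 + 2*ε*(m * t i - S)) := by
      simp only [hF]
      calc ∑ k, ((Function.update t i (t i + ε) k - y k)^2
              + c * ∑ j ∈ B k, (Function.update t i (t i + ε) j - p k j)^2)
          = ∑ k, (((t k - y k)^2 + c * ∑ j ∈ B k, (t j - p k j)^2)
              + ((if k = i then ε^2 + 2*ε*(t i - y i) else 0)
              + c * (if i ∈ B k then ε^2 + 2*ε*(t i - p k i) else 0))) := by
            refine Finset.sum_congr rfl fun k _ => ?_
            rw [hupdate k, hinner k]; ring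
        _ = (∑ k, ((t k - y k)^2 + c * ∑ j ∈ B k, (t j - p k j)^2))
              + ((∑ k, (if k = i then ε^2 + 2*ε*(t i - y i) else 0))
              + c * ∑ k, (if i ∈ B k then ε^2 + 2*ε*(t i - p k i) else 0)) := by
            simp only [Finset.sum_add_distrib, Finset.mul_sum]
        _ = F t + (ε^2 + 2*ε*(t i - y i)) + c * (m * ε^2 + 2*ε*(m * t i - S)) := by
            rw [hite, hsumB, Finset.sum_ite_eq' Finset.univ i
              (fun _ => ε^2 + 2*ε*(t i - y i)), if_pos (Finset.mem_univ i)]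
            ring
    rw [hsum] at h
    have heq : (1 + lam) * ε^2 + Bv * ε
        = (ε^2 + 2*ε*(t i - y i)) + c * (m * ε^2 + 2*ε*(m * t i - S)) := by
      rw [hBv, ← hcm]; ring
    linarith
  have hBv0 : Bv = 0 := by
    have h := key (-Bv/(2*(1+lam)))
    have heq2 : (1 + lam) * (-Bv/(2*(1+lam)))^2 + Bv * (-Bv/(2*(1+lam)))
        = -Bv^2/(4*(1+lam)) := by
      field_simp
      ring
    rw [heq2] at h
    have h4 : (0:ℝ) < 4*(1+lam) := by positivity
    have h2 : 0 ≤ -Bv^2 := by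
      calc (0:ℝ) ≤ (-Bv^2/(4*(1+lam))) * (4*(1+lam)) := mul_nonneg h h4.le
        _ = -Bv^2 := by field_simp
    have : Bv^2 = 0 := le_antisymm (by linarith) (sq_nonneg _)
    exact pow_eq_zero_iff (two_ne_zero) |>.mp this
  have hSeq : ∑ l, (∑ j ∈ B i, θ j l) * x i l = S := by
    rw [hS]
    simp only [hp, Finset.sum_mul]
    exact Finset.sum_comm
  rw [hSeq]
  have hAne : (1:ℝ) + lam ≠ 0 := ne_of_gt hA
  rw [hBv] at hBv0
  field_simp
  linarith
end

section
/- In the asymmetric game with squared-error loss and deviation, unconstrained predictor f, and linear witnesses, every equilibrium predictor f*_A satisfies the fixed point equation f*_A(xᵢ) = (1/(1+λ)) [ yᵢ + λ (X_i† f*_A(X_i))ᵀ xᵢ ] for all data points xᵢ. -/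
/-- Theorem 1, asymmetric part. In the asymmetric game with squared-error
loss and deviation, unconstrained predictor values `t i = f(xᵢ)`, and linear witnesses:
if at an equilibrium each witness coefficient `θ i` is the minimal-norm least-squares
solution on the neighborhood `B i` (i.e. `θ i = X_i† f(X_i)`), and `t` is a best
response to the fixed witness values, then
`f*_A(xᵢ) = (1/(1+λ)) [ yᵢ + λ (X_i† f*_A(X_i))ᵀ xᵢ ]` for all data points. -/
theorem stmt_7 (d n m : ℕ) (hm : 0 < m) (lam : ℝ) (hlam : 0 ≤ lam)
    (x : Fin n → Fin d → ℝ) (y : Fin n → ℝ)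
    (B : Fin n → Finset (Fin n))
    (hcard : ∀ i, (B i).card = m)
    (t : Fin n → ℝ) (θ : Fin n → Fin d → ℝ)
    -- witness best response: least-squares fit of minimal norm (Moore–Penrose solution)
    (hls : ∀ i, ∀ θ' : Fin d → ℝ,
      ∑ j ∈ B i, (t j - ∑ l, θ i l * x j l) ^ 2 ≤
        ∑ j ∈ B i, (t j - ∑ l, θ' l * x j l) ^ 2)
    (hminnorm : ∀ i, ∀ θ' : Fin d → ℝ,
      ∑ j ∈ B i, (t j - ∑ l, θ' l * x j l) ^ 2 =
        ∑ j ∈ B i, (t j - ∑ l, θ i l * x j l) ^ 2 →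
      ∑ l, (θ i l) ^ 2 ≤ ∑ l, (θ' l) ^ 2)
    -- predictor best response, with the witness values held fixed
    (hbr : ∀ s : Fin n → ℝ,
      ∑ i, ((t i - y i) ^ 2 + lam * (t i - ∑ l, θ i l * x i l) ^ 2) ≤
      ∑ i, ((s i - y i) ^ 2 + lam * (s i - ∑ l, θ i l * x i l) ^ 2)) :
    ∀ i, t i = (1 / (1 + lam)) * (y i + lam * ∑ l, θ i l * x i l) := by
  intro i
  have hpos : (0:ℝ) < 1 + lam := by linarith
  set g : ℝ := ∑ l, θ i l * x i l with hg
  set a : ℝ := (y i + lam * g) / (1 + lam) with ha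
  have ha' : (1 + lam) * a = y i + lam * g := by
    rw [ha]; field_simp
  clear_value g a
  have key : (t i - y i) ^ 2 + lam * (t i - g) ^ 2 ≤
      (a - y i) ^ 2 + lam * (a - g) ^ 2 := by
    have h := hbr (Function.update t i a)
    have hmem : i ∈ (Finset.univ : Finset (Fin n)) := Finset.mem_univ i
    rw [← Finset.add_sum_erase _ _ hmem, ← Finset.add_sum_erase _ _ hmem] at h
    have heq : ∑ j ∈ Finset.univ.erase i,
        ((Function.update t i a j - y j) ^ 2 +
          lam * (Function.update t i a j - ∑ l, θ j l * x j l) ^ 2) =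
        ∑ j ∈ Finset.univ.erase i,
        ((t j - y j) ^ 2 + lam * (t j - ∑ l, θ j l * x j l) ^ 2) := by
      refine Finset.sum_congr rfl ?_
      intro j hj
      rw [Function.update_of_ne (Finset.ne_of_mem_erase hj)]
    rw [heq, Function.update_self, ← hg] at h
    linarith
  have hsq : (1 + lam) * (t i - a) ^ 2 ≤ 0 := by
    have expand : (1 + lam) * (t i - a) ^ 2 =
        ((t i - y i) ^ 2 + lam * (t i - g) ^ 2) -
        ((a - y i) ^ 2 + lam * (a - g) ^ 2) -
        2 * (t i - a) * ((1 + lam) * a - (y i + lam * g)) := by ring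
    rw [expand, ha']
    have : y i + lam * g - (y i + lam * g) = 0 := by ring
    nlinarith [key]
  have h2 : (t i - a) ^ 2 ≤ 0 := by
    by_contra hc
    push_neg at hc
    nlinarith
  have h3 : t i - a = 0 := by
    have := le_antisymm h2 (sq_nonneg (t i - a))
    exact pow_eq_zero_iff (n := 2) (by norm_num) |>.mp this
  have : t i = a := by linarith
  rw [this, ha, hg]
  ring
end

section
/- In the uniform criterion with linear witnesses, squared-error loss and deviation, unconstrained predictor, constant neighborhood size m, and symmetric covering neighborhoods, the optimal predictor f*_U satisfies: f*_U(xᵢ) = α(xᵢ) if α(xᵢ) > yᵢ, f*_U(xᵢ) = β(xᵢ) if β(xᵢ) < yᵢ, and f*_U(xᵢ) = yᵢ otherwise, where α(xᵢ) = max over xⱼ ∈ B(xᵢ) of [(X_j† f*_U(X_j))ᵀxᵢ − sqrt(δm − Σ_{x_k ∈ B(xⱼ)∖{xᵢ}} (f*_U(x_k) − (X_j† f*_U(X_j))ᵀx_k)²)] and β(xᵢ) is the corresponding minimum with the square root added. -/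
/-- Theorem 2, uniform criterion. With linear witnesses, squared-error
loss and deviation, unconstrained predictor values `t i = f(xᵢ)`, neighborhoods of
constant size `m` that are symmetric and cover the data: if `t` is optimal for the
δ-constrained problem and each `θ j` is the minimal-norm least-squares coefficient
vector `X_j† f(X_j)` on the neighborhood `B j`, then for every `i`, with
`α i = max_{j∈B(i)} [(X_j†f(X_j))ᵀxᵢ − √(δm − Σ_{k∈B(j)∖{i}} (f(x_k) − (X_j†f(X_j))ᵀx_k)²)]`
and `β i` the corresponding minimum with the square root added:
`f*_U(xᵢ) = α i` if `α i > yᵢ`, `f*_U(xᵢ) = β i` if `β i < yᵢ`, else `f*_U(xᵢ) = yᵢ`. -/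
theorem stmt_9 (d n m : ℕ) (hm : 0 < m) (δ : ℝ)
    (x : Fin n → Fin d → ℝ) (y : Fin n → ℝ)
    (B : Fin n → Finset (Fin n))
    (hcard : ∀ i, (B i).card = m)
    (hsym : ∀ i j, j ∈ B i ↔ i ∈ B j)
    (hcover : ∀ i, ∃ j, i ∈ B j)
    (hBne : ∀ i, (B i).Nonempty)
    (t : Fin n → ℝ)
    -- feasibility of t for the uniform constraint
    (hfeas : ∀ i, ∃ θ' : Fin d → ℝ,
      (1 / (m : ℝ)) * ∑ j ∈ B i, (t j - ∑ l, θ' l * x j l) ^ 2 ≤ δ)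
    -- optimality of t among all feasible predictors
    (hopt : ∀ s : Fin n → ℝ,
      (∀ i, ∃ θ' : Fin d → ℝ,
        (1 / (m : ℝ)) * ∑ j ∈ B i, (s j - ∑ l, θ' l * x j l) ^ 2 ≤ δ) →
      ∑ i, (t i - y i) ^ 2 ≤ ∑ i, (s i - y i) ^ 2)
    (θ : Fin n → Fin d → ℝ)
    -- θ j = X_j† f(X_j): least-squares fit of minimal norm on neighborhood B j
    (hls : ∀ j, ∀ θ' : Fin d → ℝ,
      ∑ i ∈ B j, (t i - ∑ l, θ j l * x i l) ^ 2 ≤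
        ∑ i ∈ B j, (t i - ∑ l, θ' l * x i l) ^ 2)
    (hminnorm : ∀ j, ∀ θ' : Fin d → ℝ,
      ∑ i ∈ B j, (t i - ∑ l, θ' l * x i l) ^ 2 =
        ∑ i ∈ B j, (t i - ∑ l, θ j l * x i l) ^ 2 →
      ∑ l, (θ j l) ^ 2 ≤ ∑ l, (θ' l) ^ 2) :
    ∀ i : Fin n,
      (y i < (B i).sup' (hBne i) (fun j => (∑ l, θ j l * x i l) -
          Real.sqrt (δ * m - ∑ k ∈ (B j).erase i, (t k - ∑ l, θ j l * x k l) ^ 2)) →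
        t i = (B i).sup' (hBne i) (fun j => (∑ l, θ j l * x i l) -
          Real.sqrt (δ * m - ∑ k ∈ (B j).erase i, (t k - ∑ l, θ j l * x k l) ^ 2))) ∧
      ((B i).inf' (hBne i) (fun j => (∑ l, θ j l * x i l) +
          Real.sqrt (δ * m - ∑ k ∈ (B j).erase i, (t k - ∑ l, θ j l * x k l) ^ 2)) < y i →
        t i = (B i).inf' (hBne i) (fun j => (∑ l, θ j l * x i l) +
          Real.sqrt (δ * m - ∑ k ∈ (B j).erase i, (t k - ∑ l, θ j l * x k l) ^ 2))) ∧
      (((B i).sup' (hBne i) (fun j => (∑ l, θ j l * x i l) -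
          Real.sqrt (δ * m - ∑ k ∈ (B j).erase i, (t k - ∑ l, θ j l * x k l) ^ 2)) ≤ y i) →
       (y i ≤ (B i).inf' (hBne i) (fun j => (∑ l, θ j l * x i l) +
          Real.sqrt (δ * m - ∑ k ∈ (B j).erase i, (t k - ∑ l, θ j l * x k l) ^ 2))) →
        t i = y i) := by
    -- total sum bound for each neighborhood
  have hm' : (0:ℝ) < m := by exact_mod_cast hm
  have hsum : ∀ j, ∑ k ∈ B j, (t k - ∑ l, θ j l * x k l) ^ 2 ≤ δ * m := by
    intro j
    obtain ⟨θ', hθ'⟩ := hfeas j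
    have h1 := hls j θ'
    have h2 : ∑ k ∈ B j, (t k - ∑ l, θ' l * x k l) ^ 2 ≤ δ * m := by
      rw [div_mul_eq_mul_div, one_mul, div_le_iff₀ hm'] at hθ'
      linarith
    linarith
  intro i
  have key : ∀ j ∈ B i,
      (t i - ∑ l, θ j l * x i l)^2 ≤
        δ * m - ∑ k ∈ (B j).erase i, (t k - ∑ l, θ j l * x k l)^2 := by
    intro j hj
    have hij : i ∈ B j := (hsym i j).mp hj
    have h := hsum j
    rw [← Finset.add_sum_erase _ _ hij] at h
    linarith
  have hPnn : ∀ j ∈ B i,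
      (0:ℝ) ≤ δ * m - ∑ k ∈ (B j).erase i, (t k - ∑ l, θ j l * x k l)^2 :=
    fun j hj => le_trans (sq_nonneg _) (key j hj)
  have habs : ∀ j ∈ B i, |t i - ∑ l, θ j l * x i l| ≤
      Real.sqrt (δ * m - ∑ k ∈ (B j).erase i, (t k - ∑ l, θ j l * x k l)^2) := by
    intro j hj
    rw [← Real.sqrt_sq_eq_abs]
    exact Real.sqrt_le_sqrt (key j hj)
  have hAle : (B i).sup' (hBne i) (fun j => (∑ l, θ j l * x i l) -
      Real.sqrt (δ * m - ∑ k ∈ (B j).erase i, (t k - ∑ l, θ j l * x k l) ^ 2)) ≤ t i := by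
    apply Finset.sup'_le
    intro j hj
    have := (abs_le.mp (habs j hj)).1
    linarith
  have hleB : t i ≤ (B i).inf' (hBne i) (fun j => (∑ l, θ j l * x i l) +
      Real.sqrt (δ * m - ∑ k ∈ (B j).erase i, (t k - ∑ l, θ j l * x k l) ^ 2)) := by
    apply Finset.le_inf'
    intro j hj
    have := (abs_le.mp (habs j hj)).2
    linarith
  -- key improvement lemma
  have himp : ∀ c : ℝ, (∀ j ∈ B i, |c - ∑ l, θ j l * x i l| ≤
        Real.sqrt (δ * m - ∑ k ∈ (B j).erase i, (t k - ∑ l, θ j l * x k l)^2)) →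
      (t i - y i)^2 ≤ (c - y i)^2 := by
    intro c hc
    have hfeas' : ∀ i', ∃ θ' : Fin d → ℝ,
        (1 / (m : ℝ)) * ∑ j' ∈ B i', (Function.update t i c j' - ∑ l, θ' l * x j' l) ^ 2 ≤ δ := by
      intro i'
      refine ⟨θ i', ?_⟩
      have hS : ∑ j' ∈ B i', (Function.update t i c j' - ∑ l, θ i' l * x j' l) ^ 2 ≤ δ * m := by
        by_cases hi : i ∈ B i'
        · have hii' : i' ∈ B i := (hsym i' i).mp hi
          rw [← Finset.add_sum_erase _ _ hi]
          have he : ∑ k ∈ (B i').erase i, (Function.update t i c k - ∑ l, θ i' l * x k l) ^ 2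
              = ∑ k ∈ (B i').erase i, (t k - ∑ l, θ i' l * x k l) ^ 2 := by
            refine Finset.sum_congr rfl (fun k hk => ?_)
            rw [Function.update_of_ne (Finset.ne_of_mem_erase hk)]
          rw [he, Function.update_self]
          have hc' := hc i' hii'
          have hq : (c - ∑ l, θ i' l * x i l)^2 ≤
              δ * m - ∑ k ∈ (B i').erase i, (t k - ∑ l, θ i' l * x k l)^2 := by
            have h1 : |c - ∑ l, θ i' l * x i l|^2 ≤
                (Real.sqrt (δ * m - ∑ k ∈ (B i').erase i, (t k - ∑ l, θ i' l * x k l)^2))^2 :=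
              pow_le_pow_left₀ (abs_nonneg _) hc' 2
            rwa [sq_abs, Real.sq_sqrt (hPnn i' hii')] at h1
          linarith
        · have he : ∑ k ∈ B i', (Function.update t i c k - ∑ l, θ i' l * x k l) ^ 2
              = ∑ k ∈ B i', (t k - ∑ l, θ i' l * x k l) ^ 2 := by
            refine Finset.sum_congr rfl (fun k hk => ?_)
            rw [Function.update_of_ne (by rintro rfl; exact hi hk)]
          rw [he]
          exact hsum i'
      rw [div_mul_eq_mul_div, one_mul, div_le_iff₀ hm']
      linarith
    have hopt' := hopt _ hfeas'
    have hsplit : ∀ u : Fin n → ℝ, ∑ k, (u k - y k)^2 =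
        (u i - y i)^2 + ∑ k ∈ Finset.univ.erase i, (u k - y k)^2 := by
      intro u
      exact (Finset.add_sum_erase _ _ (Finset.mem_univ i)).symm
    rw [hsplit t, hsplit (Function.update t i c)] at hopt'
    have he : ∑ k ∈ Finset.univ.erase i, (Function.update t i c k - y k)^2
        = ∑ k ∈ Finset.univ.erase i, (t k - y k)^2 := by
      refine Finset.sum_congr rfl (fun k hk => ?_)
      rw [Function.update_of_ne (Finset.ne_of_mem_erase hk)]
    rw [he, Function.update_self] at hopt'
    linarith
  refine ⟨?_, ?_, ?_⟩
  · intro hyA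
    set A := (B i).sup' (hBne i) (fun j => (∑ l, θ j l * x i l) -
      Real.sqrt (δ * m - ∑ k ∈ (B j).erase i, (t k - ∑ l, θ j l * x k l) ^ 2)) with hAdef
    have hcA : ∀ j ∈ B i, |A - ∑ l, θ j l * x i l| ≤
        Real.sqrt (δ * m - ∑ k ∈ (B j).erase i, (t k - ∑ l, θ j l * x k l)^2) := by
      intro j hj
      have h1 : (∑ l, θ j l * x i l) -
          Real.sqrt (δ * m - ∑ k ∈ (B j).erase i, (t k - ∑ l, θ j l * x k l) ^ 2) ≤ A := by
        rw [hAdef]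
        exact Finset.le_sup' (fun j => (∑ l, θ j l * x i l) -
          Real.sqrt (δ * m - ∑ k ∈ (B j).erase i, (t k - ∑ l, θ j l * x k l) ^ 2)) hj
      have h2 := (abs_le.mp (habs j hj)).2
      rw [abs_le]
      constructor <;> linarith
    have h3 := himp A hcA
    nlinarith
  · intro hBy
    set Bv := (B i).inf' (hBne i) (fun j => (∑ l, θ j l * x i l) +
      Real.sqrt (δ * m - ∑ k ∈ (B j).erase i, (t k - ∑ l, θ j l * x k l) ^ 2)) with hBdef
    have hcB : ∀ j ∈ B i, |Bv - ∑ l, θ j l * x i l| ≤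
        Real.sqrt (δ * m - ∑ k ∈ (B j).erase i, (t k - ∑ l, θ j l * x k l)^2) := by
      intro j hj
      have h1 : Bv ≤ (∑ l, θ j l * x i l) +
          Real.sqrt (δ * m - ∑ k ∈ (B j).erase i, (t k - ∑ l, θ j l * x k l) ^ 2) := by
        rw [hBdef]
        exact Finset.inf'_le (fun j => (∑ l, θ j l * x i l) +
          Real.sqrt (δ * m - ∑ k ∈ (B j).erase i, (t k - ∑ l, θ j l * x k l) ^ 2)) hj
      have h2 := (abs_le.mp (habs j hj)).1
      rw [abs_le]
      constructor <;> linarith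
    have h3 := himp Bv hcB
    nlinarith
  · intro hAy hyB
    have hcY : ∀ j ∈ B i, |y i - ∑ l, θ j l * x i l| ≤
        Real.sqrt (δ * m - ∑ k ∈ (B j).erase i, (t k - ∑ l, θ j l * x k l)^2) := by
      intro j hj
      have h1 : (∑ l, θ j l * x i l) -
          Real.sqrt (δ * m - ∑ k ∈ (B j).erase i, (t k - ∑ l, θ j l * x k l) ^ 2) ≤
          (B i).sup' (hBne i) (fun j => (∑ l, θ j l * x i l) -
            Real.sqrt (δ * m - ∑ k ∈ (B j).erase i, (t k - ∑ l, θ j l * x k l) ^ 2)) :=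
        Finset.le_sup' (fun j => (∑ l, θ j l * x i l) -
          Real.sqrt (δ * m - ∑ k ∈ (B j).erase i, (t k - ∑ l, θ j l * x k l) ^ 2)) hj
      have h2 : (B i).inf' (hBne i) (fun j => (∑ l, θ j l * x i l) +
            Real.sqrt (δ * m - ∑ k ∈ (B j).erase i, (t k - ∑ l, θ j l * x k l) ^ 2)) ≤
          (∑ l, θ j l * x i l) +
          Real.sqrt (δ * m - ∑ k ∈ (B j).erase i, (t k - ∑ l, θ j l * x k l) ^ 2) :=
        Finset.inf'_le (fun j => (∑ l, θ j l * x i l) +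
          Real.sqrt (δ * m - ∑ k ∈ (B j).erase i, (t k - ∑ l, θ j l * x k l) ^ 2)) hj
      rw [abs_le]
      constructor <;> linarith
    have h3 := himp (y i) hcY
    have h0 : (t i - y i)^2 = 0 := le_antisymm (by linarith [sq_nonneg (y i - y i)]) (sq_nonneg _)
    have := pow_eq_zero_iff (n := 2) (by norm_num) |>.mp h0
    linarith
end

section
/- With squared-error deviation, symmetric covering neighborhoods, differentiable loss ℒ, and sub-differentiable f, the objective Σᵢ [ℒ(f(xᵢ), yᵢ) + (λ/N̄ᵢ)(N̄ᵢ f(xᵢ) − Σ_{x_t ∈ B(xᵢ)} ĝ_{x_t}(xᵢ)/|B(x_t)|)²], where N̄ᵢ = Σ_{x_t ∈ B(xᵢ)} 1/|B(x_t)|, has the same first-order optimality (stationarity) condition in f as the symmetric game objective Σᵢ [ℒ(f(xᵢ), yᵢ) + (λ/|B(xᵢ)|) Σ_{xⱼ∈B(xᵢ)} (f(xⱼ) − ĝ_{xᵢ}(xⱼ))²], when witnesses ĝ are held fixed at their best responses. -/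
open Finset

/-- `N̄ᵢ = Σ_{x_t ∈ B(xᵢ)} 1/|B(x_t)|`. -/
noncomputable def Nbar {n : ℕ} (B : Fin n → Finset (Fin n)) (i : Fin n) : ℝ :=
  ∑ j ∈ B i, 1 / ((B j).card : ℝ)

/-- The adjusted asymmetric objective of Lemma 3 (witness values `g j i = ĝ_{x_j}(xᵢ)`
held fixed). -/
noncomputable def adjObj {n : ℕ} (B : Fin n → Finset (Fin n)) (L : ℝ → ℝ → ℝ)
    (lam : ℝ) (y : Fin n → ℝ) (g : Fin n → Fin n → ℝ) (u : Fin n → ℝ) : ℝ :=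
  ∑ i, (L (u i) (y i) +
    (lam / Nbar B i) *
      (Nbar B i * u i - ∑ j ∈ B i, g j i / ((B j).card : ℝ)) ^ 2)

/-- The symmetric-game objective (witness values held fixed). -/
noncomputable def symObj {n : ℕ} (B : Fin n → Finset (Fin n)) (L : ℝ → ℝ → ℝ)
    (lam : ℝ) (y : Fin n → ℝ) (g : Fin n → Fin n → ℝ) (u : Fin n → ℝ) : ℝ :=
  ∑ i, (L (u i) (y i) +
    (lam / ((B i).card : ℝ)) * ∑ j ∈ B i, (u j - g i j) ^ 2)

/-- Lemma 3: with squared-error deviation, symmetric covering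
neighborhoods, differentiable loss `ℒ`, and the witnesses held fixed, the adjusted
objective has the same first-order stationarity condition (identical partial
derivatives in every predictor value) as the symmetric-game objective. -/
theorem stmt_10 (n : ℕ) (lam : ℝ)
    (B : Fin n → Finset (Fin n)) (hne : ∀ i, (B i).Nonempty)
    (hsym : ∀ i j, j ∈ B i ↔ i ∈ B j)
    (hcover : ∀ i, ∃ j, i ∈ B j)
    (y : Fin n → ℝ) (g : Fin n → Fin n → ℝ)
    (L : ℝ → ℝ → ℝ) (hL : ∀ b : ℝ, Differentiable ℝ fun a => L a b) :
    ∀ (t : Fin n → ℝ) (i : Fin n),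
      deriv (fun s => adjObj B L lam y g (Function.update t i s)) (t i) =
      deriv (fun s => symObj B L lam y g (Function.update t i s)) (t i) := by
  intro t i
  have hcard : ∀ j : Fin n, (0:ℝ) < ((B j).card : ℝ) := fun j => by
    exact_mod_cast (hne j).card_pos
  have hNpos : 0 < Nbar B i :=
    Finset.sum_pos (fun j _ => one_div_pos.mpr (hcard j)) (hne i)
  set D := deriv (fun a => L a (y i)) (t i) with hD
  have hLd : HasDerivAt (fun a => L a (y i)) D (t i) := ((hL (y i)) (t i)).hasDerivAt
  set S : ℝ := ∑ j ∈ B i, g j i / ((B j).card : ℝ) with hS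
  -- derivative of the adjusted objective
  have hadj : HasDerivAt (fun s => adjObj B L lam y g (Function.update t i s))
      (D + lam * (2 * (Nbar B i * t i - S))) (t i) := by
    have hsum : HasDerivAt
        (fun s => ∑ k, (L (Function.update t i s k) (y k) +
          (lam / Nbar B k) *
            (Nbar B k * Function.update t i s k -
              ∑ j ∈ B k, g j k / ((B j).card : ℝ)) ^ 2))
        (∑ k, if k = i then
            D + (lam / Nbar B i) * (2 * (Nbar B i * t i - S) ^ 1 * (Nbar B i * 1))
          else 0) (t i) := by
      apply HasDerivAt.fun_sum
      intro k _
      rcases eq_or_ne k i with rfl | hk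
      · simp only [Function.update_self, if_pos rfl, ← hS]
        have h2 : HasDerivAt (fun s : ℝ => Nbar B k * s - S) (Nbar B k * 1) (t k) :=
          ((hasDerivAt_id (t k)).const_mul (Nbar B k)).sub_const S
        have h3 := ((h2.fun_pow 2).const_mul (lam / Nbar B k))
        have h4 := hLd.fun_add h3
        convert h4 using 1 <;> (push_cast; ring)
      · simp only [Function.update_of_ne hk, if_neg hk]
        exact hasDerivAt_const _ _
    rw [Finset.sum_ite_eq' Finset.univ i, if_pos (Finset.mem_univ i)] at hsum
    have : adjObj B L lam y g = fun u => ∑ k, (L (u k) (y k) +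
        (lam / Nbar B k) * (Nbar B k * u k - ∑ j ∈ B k, g j k / ((B j).card : ℝ)) ^ 2) := rfl
    rw [this]
    convert hsum using 1
    field_simp
  -- derivative of the symmetric objective
  have hsymd : HasDerivAt (fun s => symObj B L lam y g (Function.update t i s))
      (D + ∑ k, (lam / ((B k).card : ℝ)) *
        (if i ∈ B k then 2 * (t i - g k i) else 0)) (t i) := by
    have hsum : HasDerivAt
        (fun s => ∑ k, (L (Function.update t i s k) (y k) +
          (lam / ((B k).card : ℝ)) * ∑ j ∈ B k, (Function.update t i s j - g k j) ^ 2))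
        (∑ k, ((if k = i then D else 0) +
          (lam / ((B k).card : ℝ)) * (if i ∈ B k then 2 * (t i - g k i) else 0))) (t i) := by
      apply HasDerivAt.fun_sum
      intro k _
      have hinner : HasDerivAt
          (fun s => ∑ j ∈ B k, (Function.update t i s j - g k j) ^ 2)
          (if i ∈ B k then 2 * (t i - g k i) else 0) (t i) := by
        have hjall : ∀ j ∈ B k, HasDerivAt
            (fun s => (Function.update t i s j - g k j) ^ 2)
            ((fun j => if j = i then 2 * (t i - g k j) else 0) j) (t i) := by
          intro j _
          rcases eq_or_ne j i with rfl | hj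
          · simp only [Function.update_self, if_pos rfl, if_true]
            have h1 : HasDerivAt (fun s : ℝ => s - g k j) 1 (t j) :=
              (hasDerivAt_id (t j)).sub_const _
            have h2 := h1.fun_pow 2
            exact h2.congr_deriv (by push_cast; ring)
          · simp only [Function.update_of_ne hj, if_neg hj]
            exact hasDerivAt_const _ _
        have := HasDerivAt.fun_sum hjall
        rwa [Finset.sum_ite_eq' (B k) i] at this
      have hLpart : HasDerivAt (fun s => L (Function.update t i s k) (y k))
          (if k = i then D else 0) (t i) := by
        rcases eq_or_ne k i with rfl | hk
        · simpa only [Function.update_self, if_pos rfl, if_true] using hLd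
        · simp only [Function.update_of_ne hk, if_neg hk]
          exact hasDerivAt_const _ _
      exact hLpart.add (hinner.const_mul _)
    rw [Finset.sum_add_distrib, Finset.sum_ite_eq' Finset.univ i,
      if_pos (Finset.mem_univ i)] at hsum
    exact hsum
  rw [hadj.deriv, hsymd.deriv]
  congr 1
  -- algebraic identity
  have hrhs : ∑ k, (lam / ((B k).card : ℝ)) * (if i ∈ B k then 2 * (t i - g k i) else 0)
      = ∑ k ∈ B i, (lam / ((B k).card : ℝ)) * (2 * (t i - g k i)) := by
    simp only [mul_ite, mul_zero]
    rw [← Finset.sum_filter]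
    congr 1
    ext k
    simp [hsym i k]
  rw [hrhs, hS, Nbar, Finset.sum_mul, ← Finset.sum_sub_distrib, Finset.mul_sum,
    Finset.mul_sum]
  apply Finset.sum_congr rfl
  intro j hj
  have : ((B j).card : ℝ) ≠ 0 := ne_of_gt (hcard j)
  field_simp
  try ring
end

section
/- For the constant witness class and the symmetric game with squared error, the optimal predictor satisfies f*_S(xᵢ) = (1/(1+λ)) [ yᵢ + (λ/m) Σ_{xⱼ ∈ B(xᵢ)} (1/m) Σ_{x_k ∈ B(xⱼ)} f*_S(x_k) ], i.e., the regularization term applies a two-fold neighborhood-averaging convolution, whereas the asymmetric game applies it once; both use the same decay rate λ/(1+λ). -/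
lemma quad_zero (A L : ℝ) (h : ∀ ε : ℝ, 0 ≤ A * ε ^ 2 + L * ε) : L = 0 := by
  by_contra hL
  have h1 := h (-L / (|A| + 1))
  have hA : A ≤ |A| := le_abs_self A
  have hApos : (0:ℝ) < |A| + 1 := by positivity
  have hL2 : 0 < L ^ 2 := by positivity
  have h2 : 0 ≤ (|A| + 1) ^ 2 * (A * (-L / (|A| + 1)) ^ 2 + L * (-L / (|A| + 1))) :=
    mul_nonneg (by positivity) h1
  have h3 : (|A| + 1) ^ 2 * (A * (-L / (|A| + 1)) ^ 2 + L * (-L / (|A| + 1)))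
      = A * L ^ 2 - L ^ 2 * (|A| + 1) := by
    field_simp
    ring
  rw [h3] at h2
  nlinarith

lemma inf_sq {ι : Type*} (S : Finset ι) (a : ι → ℝ) (m : ℕ) (hm : 0 < m) (hS : S.card = m) :
    (⨅ c : ℝ, ∑ j ∈ S, (a j - c) ^ 2) = ∑ j ∈ S, (a j) ^ 2 - (∑ j ∈ S, a j) ^ 2 / m := by
  have hM : (0:ℝ) < m := Nat.cast_pos.mpr hm
  set μ : ℝ := (∑ j ∈ S, a j) / m with hμ
  have key : ∀ c : ℝ, ∑ j ∈ S, (a j - c) ^ 2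
      = (∑ j ∈ S, (a j) ^ 2 - (∑ j ∈ S, a j) ^ 2 / m) + m * (μ - c) ^ 2 := by
    intro c
    have expand : ∀ j ∈ S, (a j - c) ^ 2 = (a j) ^ 2 - 2 * c * a j + c ^ 2 := by
      intro j _; ring
    rw [Finset.sum_congr rfl expand, Finset.sum_add_distrib, Finset.sum_sub_distrib,
      ← Finset.mul_sum, Finset.sum_const, hS, hμ]
    field_simp
    ring
  have hbdd : BddBelow (Set.range fun c : ℝ => ∑ j ∈ S, (a j - c) ^ 2) := by
    refine ⟨∑ j ∈ S, (a j) ^ 2 - (∑ j ∈ S, a j) ^ 2 / m, ?_⟩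
    rintro x ⟨c, rfl⟩
    show _ ≤ ∑ j ∈ S, (a j - c) ^ 2
    rw [key c]
    have : 0 ≤ (m:ℝ) * (μ - c) ^ 2 := by positivity
    linarith
  apply le_antisymm
  · have h1 := ciInf_le hbdd μ
    simpa [key μ] using h1
  · refine le_ciInf fun c => ?_
    show _ ≤ ∑ j ∈ S, (a j - c) ^ 2
    rw [key c]
    have : 0 ≤ (m:ℝ) * (μ - c) ^ 2 := by positivity
    linarith

/-- for the constant witness class in the symmetric game with squared
error (unconstrained predictor values `t i = f(xᵢ)`, symmetric covering neighborhoods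
of constant size `m`), any optimal predictor satisfies the two-fold
neighborhood-averaging fixed point
`f*_S(xᵢ) = (1/(1+λ)) [ yᵢ + (λ/m) Σ_{xⱼ∈B(xᵢ)} (1/m) Σ_{x_k∈B(xⱼ)} f*_S(x_k) ]`
(decay rate `λ/(1+λ)`, averaging applied twice; the asymmetric game applies it once). -/
theorem stmt_17 (n m : ℕ) (hm : 0 < m) (lam : ℝ) (hlam : 0 ≤ lam)
    (B : Fin n → Finset (Fin n)) (hcard : ∀ i, (B i).card = m)
    (hsym : ∀ i j, j ∈ B i ↔ i ∈ B j)
    (hcover : ∀ i, ∃ j, i ∈ B j)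
    (y t : Fin n → ℝ)
    (hopt : ∀ s : Fin n → ℝ,
      ∑ i, ((t i - y i) ^ 2 + (lam / m) * ⨅ c : ℝ, ∑ j ∈ B i, (t j - c) ^ 2) ≤
      ∑ i, ((s i - y i) ^ 2 + (lam / m) * ⨅ c : ℝ, ∑ j ∈ B i, (s j - c) ^ 2)) :
    ∀ i, t i = (1 / (1 + lam)) *
      (y i + (lam / m) * ∑ j ∈ B i, (1 / (m : ℝ)) * ∑ k ∈ B j, t k) := by
  have hM : (0:ℝ) < m := Nat.cast_pos.mpr hm
  have hm0 : (m:ℝ) ≠ 0 := hM.ne'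
  have hrw : ∀ (a : Fin n → ℝ) (l : Fin n),
      (⨅ c : ℝ, ∑ j ∈ B l, (a j - c) ^ 2)
      = ∑ j ∈ B l, (a j) ^ 2 - (∑ j ∈ B l, a j) ^ 2 / m :=
    fun a l => inf_sq (B l) a m hm (hcard l)
  simp only [hrw] at hopt
  intro i
  -- sums over { l : i ∈ B l } are sums over B i
  have hBfilter : ∀ f : Fin n → ℝ,
      ∑ l, (if i ∈ B l then f l else 0) = ∑ l ∈ B i, f l := by
    intro f
    have hBi : B i = Finset.univ.filter (fun l => i ∈ B l) := by
      ext l; simp [hsym i l]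
    rw [hBi, Finset.sum_filter]
  set S : ℝ := ∑ l ∈ B i, ∑ k ∈ B l, t k with hS
  set A : ℝ := 1 + lam - lam / m with hA
  set L : ℝ := 2 * (t i - y i) + 2 * lam * t i - (2 * lam / m ^ 2) * S with hL
  have key : ∀ ε : ℝ, 0 ≤ A * ε ^ 2 + L * ε := by
    intro ε
    have h := hopt (fun j => t j + if j = i then ε else 0)
    -- compute the perturbed sums
    have hp : ∀ l, ∑ j ∈ B l, (t j + if j = i then ε else 0)
        = (∑ j ∈ B l, t j) + (if i ∈ B l then ε else 0) := by
      intro l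
      rw [Finset.sum_add_distrib, Finset.sum_ite_eq' (B l) i (fun _ => ε)]
    have hq : ∀ l, ∑ j ∈ B l, (t j + if j = i then ε else 0) ^ 2
        = (∑ j ∈ B l, (t j) ^ 2) + (if i ∈ B l then 2 * ε * t i + ε ^ 2 else 0) := by
      intro l
      have hcongr : ∀ j ∈ B l, (t j + if j = i then ε else 0) ^ 2
          = (t j) ^ 2 + (if j = i then 2 * ε * t i + ε ^ 2 else 0) := by
        intro j _
        by_cases hj : j = i
        · subst hj; simp; ring
        · simp [hj]
      rw [Finset.sum_congr rfl hcongr, Finset.sum_add_distrib,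
        Finset.sum_ite_eq' (B l) i (fun _ => 2 * ε * t i + ε ^ 2)]
    have hdiff : ∀ l : Fin n,
        ((t l + if l = i then ε else 0) - y l) ^ 2
          + (lam / m) * (∑ j ∈ B l, (t j + if j = i then ε else 0) ^ 2
            - (∑ j ∈ B l, (t j + if j = i then ε else 0)) ^ 2 / m)
        - ((t l - y l) ^ 2 + (lam / m) * (∑ j ∈ B l, (t j) ^ 2 - (∑ j ∈ B l, t j) ^ 2 / m))
        = (if l = i then 2 * ε * (t i - y i) + ε ^ 2 else 0)
          + (lam / m) * ((if i ∈ B l then 2 * ε * t i + ε ^ 2 - ε ^ 2 / m else 0)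
            - (2 * ε / m) * (if i ∈ B l then (∑ k ∈ B l, t k) else 0)) := by
      intro l
      rw [hp l, hq l]
      by_cases hli : l = i <;> by_cases hil : i ∈ B l
      · simp only [if_pos hil]; simp only [if_pos hli, hli, ↓reduceIte]; field_simp; ring
      · simp only [if_neg hil]; simp only [if_pos hli, hli, ↓reduceIte]; field_simp; ring
      · simp only [if_neg hli, if_pos hil]; field_simp; ring
      · simp only [if_neg hli, if_neg hil]; field_simp; ring
    have hsum : ∑ l, (((t l + if l = i then ε else 0) - y l) ^ 2
          + (lam / m) * (∑ j ∈ B l, (t j + if j = i then ε else 0) ^ 2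
            - (∑ j ∈ B l, (t j + if j = i then ε else 0)) ^ 2 / m)
        - ((t l - y l) ^ 2 + (lam / m) * (∑ j ∈ B l, (t j) ^ 2 - (∑ j ∈ B l, t j) ^ 2 / m)))
        = A * ε ^ 2 + L * ε := by
      rw [Finset.sum_congr rfl (fun l _ => hdiff l)]
      rw [Finset.sum_add_distrib, ← Finset.mul_sum, Finset.sum_sub_distrib,
        ← Finset.mul_sum, hBfilter, hBfilter]
      rw [Finset.sum_ite_eq' Finset.univ i (fun _ => 2 * ε * (t i - y i) + ε ^ 2)]
      simp only [Finset.mem_univ, if_true]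
      rw [Finset.sum_const, hcard i, nsmul_eq_mul, ← hS, hA, hL]
      field_simp
      ring
    rw [Finset.sum_sub_distrib] at hsum
    rw [← hsum]
    have := sub_nonneg.mpr h
    exact this
  have hL0 : L = 0 := quad_zero A L key
  have hclear : 2 * (t i - y i) * (m:ℝ) ^ 2 + 2 * lam * t i * (m:ℝ) ^ 2 - 2 * lam * S
      = L * (m:ℝ) ^ 2 := by
    rw [hL]; field_simp
  rw [hL0, zero_mul] at hclear
  have hlampos : (0:ℝ) < 1 + lam := by linarith
  have hsum' : ∑ j ∈ B i, (1 / (m : ℝ)) * ∑ k ∈ B j, t k = S / m := by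
    rw [← Finset.mul_sum, ← hS]; ring
  rw [hsum']
  field_simp
  linarith [hclear]
end
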